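/- Let T be a K^∞ kernel of Mercer type on ℝ², and let m: ℝ→ℝ be an infinitely differentiable positive function belonging to L²(ℝ) all of whose derivatives m^{(i)} (i ≥ 0) belong to C(ℝ,ℝ). Then the function Γ(s,t) = m(s)·T(s,t) is a Hilbert-Schmidt kernel and a K^∞ kernel; that is: ∫_ℝ∫_ℝ|Γ(s,t)|²dt ds < ∞; Γ and all its partial derivatives of all orders belong to C(ℝ²,ℂ); and the Carleman functions γ(s) = conj(Γ(s,·)) and γ′(t) = Γ(·,t), viewed as maps ℝ→L²(ℝ), together with all their strong derivatives of all orders, belong to C(ℝ,L²(ℝ)). -/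

import Mathlib

open MeasureTheory Filter Topology ComplexConjugate ENNReal NNReal

noncomputable section

/-- `L²(ℝ)` with Lebesgue measure. -/
abbrev L2R := Lp ℂ 2 (volume : Measure ℝ)

/-- A function in `C(X, E)`: continuous and vanishing at infinity. -/
def InC0 {X E : Type*} [TopologicalSpace X] [NormedAddCommGroup E] (f : X → E) : Prop :=
  Continuous f ∧ Tendsto f (cocompact X) (𝓝 0)

/-- `k` is a kernel of the integral operator `T` on `L²(Y,μ)`. -/
def IsIntegralKernelOf {Y : Type*} [MeasurableSpace Y] {μ : Measure Y}
    (k : Y → Y → ℂ) (T : Lp ℂ 2 μ →L[ℂ] Lp ℂ 2 μ) : Prop :=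
  Measurable (Function.uncurry k) ∧
  ∀ f : Lp ℂ 2 μ, ∀ᵐ x ∂μ, (T f : Y → ℂ) x = ∫ y, k x y * (f : Y → ℂ) y ∂μ

/-- Mixed partial derivative `∂^{i+j} T/∂s^i ∂t^j`. -/
def pderivMixed (i j : ℕ) (T : ℝ → ℝ → ℂ) (s t : ℝ) : ℂ :=
  iteratedDeriv i (fun s' => iteratedDeriv j (fun t' => T s' t') t) s

/-- A `K^∞` kernel. -/
def IsKInftyKernel (T : ℝ → ℝ → ℂ) : Prop :=
  Measurable (Function.uncurry T) ∧
  (∀ᵐ x : ℝ, MemLp (T x) 2 (volume : Measure ℝ)) ∧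
  (∀ᵐ x : ℝ, MemLp (fun y => T y x) 2 (volume : Measure ℝ)) ∧
  ContDiff ℝ (⊤ : ℕ∞) (Function.uncurry T) ∧
  (∀ i j : ℕ, InC0 (fun p : ℝ × ℝ => pderivMixed i j T p.1 p.2)) ∧
  (∃ tC : ℝ → L2R, (∀ s : ℝ, (tC s : ℝ → ℂ) =ᵐ[volume] fun y => conj (T s y)) ∧
      ContDiff ℝ (⊤ : ℕ∞) tC ∧ ∀ i : ℕ, InC0 (iteratedDeriv i tC)) ∧
  (∃ tC' : ℝ → L2R, (∀ s : ℝ, (tC' s : ℝ → ℂ) =ᵐ[volume] fun y => T y s) ∧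
      ContDiff ℝ (⊤ : ℕ∞) tC' ∧ ∀ j : ℕ, InC0 (iteratedDeriv j tC'))

/-- The family `M⁺(T)`. -/
def MPlus {H : Type*} [NormedAddCommGroup H] [InnerProductSpace ℂ H] [CompleteSpace H]
    (T : H →L[ℂ] H) : Set (H →L[ℂ] H) :=
  {P | P.IsPositive ∧ ∃ B : H →L[ℂ] H, P = T ∘L B ∨ P = B ∘L T}

/-- A `K^∞` kernel of Mercer type. -/
def IsMercerKInftyKernel (T : ℝ → ℝ → ℂ) : Prop :=
  IsKInftyKernel T ∧
  ∃ Top : L2R →L[ℂ] L2R, IsIntegralKernelOf T Top ∧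
    ∀ P ∈ MPlus Top, ∃ k : ℝ → ℝ → ℂ, IsKInftyKernel k ∧ IsIntegralKernelOf k P

/-- A Hilbert–Schmidt kernel on `ℝ²`. -/
def IsHilbertSchmidtKernel (Γ : ℝ → ℝ → ℂ) : Prop :=
  Measurable (Function.uncurry Γ) ∧
  (∫⁻ s : ℝ, ∫⁻ t : ℝ, (‖Γ s t‖₊ : ℝ≥0∞) ^ 2 ∂volume ∂volume) < ⊤

/-- `T` is a bi-integral operator whose kernel is a `K^∞` kernel of Mercer type. -/
def IsBiIntegralWithMercerKInftyKernel (T : L2R →L[ℂ] L2R) : Prop :=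
  (∃ k : ℝ → ℝ → ℂ, IsMercerKInftyKernel k ∧ IsIntegralKernelOf k T) ∧
  (∃ k' : ℝ → ℝ → ℂ, IsIntegralKernelOf k' (ContinuousLinearMap.adjoint T))

end

/-! ### Auxiliary lemmas -/

noncomputable section Aux
open Finset

private lemma InC0.exists_bound {X E : Type*} [TopologicalSpace X] [NormedAddCommGroup E]
    {f : X → E} (hf : InC0 f) : ∃ C : ℝ, 0 ≤ C ∧ ∀ x, ‖f x‖ ≤ C := by
  have h1 : ∀ᶠ x in cocompact X, f x ∈ Metric.closedBall 0 1 :=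
    hf.2.eventually (Metric.closedBall_mem_nhds 0 one_pos)
  rw [hasBasis_cocompact.eventually_iff] at h1
  obtain ⟨K, hK, hKf⟩ := h1
  obtain ⟨C, hC⟩ := hK.exists_bound_of_continuousOn hf.1.continuousOn
  refine ⟨max C 1, le_trans zero_le_one (le_max_right _ _), fun x => ?_⟩
  by_cases hx : x ∈ K
  · exact (hC x hx).trans (le_max_left _ _)
  · have := hKf hx
    simp only [Metric.mem_closedBall, dist_zero_right] at this
    exact this.trans (le_max_right _ _)

private lemma InC0.sum {X E : Type*} [TopologicalSpace X] [NormedAddCommGroup E]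
    {ι : Type*} (s : Finset ι) (f : ι → X → E) (h : ∀ i ∈ s, InC0 (f i)) :
    InC0 (fun x => ∑ i ∈ s, f i x) := by
  constructor
  · exact continuous_finset_sum s fun i hi => (h i hi).1
  · simpa using tendsto_finset_sum s fun i hi => (h i hi).2

private lemma InC0.nsmul {X E : Type*} [TopologicalSpace X] [NormedAddCommGroup E]
    {f : X → E} (hf : InC0 f) (n : ℕ) : InC0 (fun x => n • f x) :=
  ⟨hf.1.const_smul n, by simpa using hf.2.const_smul n⟩

private lemma InC0.smul_bdd {X E : Type*} [TopologicalSpace X] [NormedAddCommGroup E]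
    [NormedSpace ℝ E] [NormedSpace ℂ E] {c : X → ℂ} {F : X → E} (hc : Continuous c)
    {C : ℝ} (hC : ∀ x, ‖c x‖ ≤ C) (hF : InC0 F) : InC0 (fun x => c x • F x) := by
  refine ⟨hc.smul hF.1, ?_⟩
  rw [tendsto_zero_iff_norm_tendsto_zero]
  have hb : Tendsto (fun x => C * ‖F x‖) (cocompact X) (𝓝 (C * 0)) :=
    (tendsto_zero_iff_norm_tendsto_zero.mp hF.2).const_mul C
  rw [mul_zero] at hb
  refine squeeze_zero (fun x => norm_nonneg _) (fun x => ?_) hb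
  rw [norm_smul]
  exact mul_le_mul_of_nonneg_right (hC x) (norm_nonneg _)

private lemma InC0.clm_comp {X E F : Type*} [TopologicalSpace X] [NormedAddCommGroup E]
    [NormedAddCommGroup F] [NormedSpace ℝ E] [NormedSpace ℝ F] {f : X → E} (hf : InC0 f)
    (A : E →L[ℝ] F) : InC0 (fun x => A (f x)) := by
  refine ⟨A.continuous.comp hf.1, ?_⟩
  have := (A.continuous.tendsto 0).comp hf.2
  simpa [Function.comp_def] using this

private lemma iteratedDeriv_clm_comp' {E F : Type*} [NormedAddCommGroup E] [NormedSpace ℝ E]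
    [NormedAddCommGroup F] [NormedSpace ℝ F] (g : E →L[ℝ] F) {f : ℝ → E}
    (hf : ContDiff ℝ (⊤ : ℕ∞) f) (n : ℕ) (x : ℝ) :
    iteratedDeriv n (fun y => g (f y)) x = g (iteratedDeriv n f x) := by
  have h := g.iteratedFDeriv_comp_left (hf.contDiffAt (x := x)) (by exact_mod_cast (le_top : (n : ℕ∞) ≤ ⊤) : ((n : ℕ) : WithTop ℕ∞) ≤ ((⊤ : ℕ∞) : WithTop ℕ∞))
  rw [iteratedDeriv_eq_iteratedFDeriv, iteratedDeriv_eq_iteratedFDeriv]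
  rw [show (fun y => g (f y)) = g ∘ f from rfl, h]
  rfl

private lemma iteratedDeriv_smul_leibniz {E : Type*} [NormedAddCommGroup E] [NormedSpace ℂ E]
    {c : ℝ → ℂ} {F : ℝ → E} (hc : ContDiff ℝ (⊤ : ℕ∞) c) (hF : ContDiff ℝ (⊤ : ℕ∞) F) :
    ∀ (n : ℕ) (x : ℝ), iteratedDeriv n (fun y => c y • F y) x =
      ∑ k ∈ range (n + 1), n.choose k • (iteratedDeriv k c x • iteratedDeriv (n - k) F x) := by
  have hdc : ∀ (k : ℕ) (y : ℝ), HasDerivAt (iteratedDeriv k c) (iteratedDeriv (k+1) c y) y := by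
    intro k y
    rw [iteratedDeriv_succ]
    exact ((hc.differentiable_iteratedDeriv k (by exact_mod_cast ENat.coe_lt_top k)) y).hasDerivAt
  have hdF : ∀ (k : ℕ) (y : ℝ), HasDerivAt (iteratedDeriv k F) (iteratedDeriv (k+1) F y) y := by
    intro k y
    rw [iteratedDeriv_succ]
    exact ((hF.differentiable_iteratedDeriv k (by exact_mod_cast ENat.coe_lt_top k)) y).hasDerivAt
  intro n
  induction n with
  | zero => intro x; simp
  | succ n ih =>
    intro x
    have hfun : iteratedDeriv n (fun y => c y • F y) = fun y =>
        ∑ k ∈ range (n + 1), n.choose k • (iteratedDeriv k c y • iteratedDeriv (n - k) F y) :=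
      funext ih
    have hsum : HasDerivAt (fun y => ∑ k ∈ range (n + 1),
          n.choose k • (iteratedDeriv k c y • iteratedDeriv (n - k) F y))
        (∑ k ∈ range (n + 1), n.choose k •
          (iteratedDeriv k c x • iteratedDeriv (n - k + 1) F x
            + iteratedDeriv (k+1) c x • iteratedDeriv (n - k) F x)) x := by
      refine HasDerivAt.fun_sum fun k _ => ?_
      exact ((hdc k x).smul (hdF (n - k) x)).const_smul (n.choose k)
    rw [iteratedDeriv_succ, hfun, hsum.deriv]
    set a : ℕ → ℂ := fun k => iteratedDeriv k c x with ha
    set b : ℕ → E := fun k => iteratedDeriv k F x with hb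
    have split : ∑ k ∈ range (n + 1), n.choose k • (a k • b (n - k + 1) + a (k+1) • b (n - k))
        = (∑ k ∈ range (n + 1), n.choose k • (a (k+1) • b (n - k)))
          + ∑ k ∈ range (n + 1), n.choose k • (a k • b (n + 1 - k)) := by
      rw [← sum_add_distrib]
      refine sum_congr rfl fun k hk => ?_
      rw [mem_range] at hk
      have : n - k + 1 = n + 1 - k := by omega
      rw [this, smul_add, add_comm]
    rw [split]
    have hS2 : ∑ k ∈ range (n + 1), n.choose k • (a k • b (n + 1 - k))
        = (∑ k ∈ range (n + 1), n.choose (k+1) • (a (k+1) • b (n - k))) + a 0 • b (n + 1) := by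
      rw [sum_range_succ' (fun k => n.choose k • (a k • b (n + 1 - k))) n]
      rw [sum_range_succ (fun k => n.choose (k+1) • (a (k+1) • b (n - k))) n]
      simp only [Nat.choose_succ_self, zero_smul, add_zero, Nat.choose_zero_right, one_smul,
        Nat.sub_zero, Nat.succ_sub_succ]
    rw [hS2]
    rw [sum_range_succ' (fun k => (n+1).choose k • (a k • b (n + 1 - k))) (n+1)]
    simp only [Nat.choose_succ_succ, Nat.choose_zero_right, one_smul, Nat.sub_zero,
      Nat.add_sub_add_right, add_smul]
    rw [sum_add_distrib]
    abel

private lemma pderivMixed_zero_smooth {T : ℝ → ℝ → ℂ} (hT : ContDiff ℝ (⊤ : ℕ∞) (Function.uncurry T))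
    (j : ℕ) : ContDiff ℝ (⊤ : ℕ∞) (fun p : ℝ × ℝ => pderivMixed 0 j T p.1 p.2) := by
  induction j with
  | zero =>
    have : (fun p : ℝ × ℝ => pderivMixed 0 0 T p.1 p.2) = Function.uncurry T := by
      funext p; simp [pderivMixed, Function.uncurry]
    rw [this]; exact hT
  | succ j ih =>
    have heq : (fun p : ℝ × ℝ => pderivMixed 0 (j+1) T p.1 p.2)
        = fun p : ℝ × ℝ => fderiv ℝ (fun t' => pderivMixed 0 j T p.1 t') p.2 1 := by
      funext p
      simp only [pderivMixed, iteratedDeriv_zero, iteratedDeriv_succ]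
      rw [fderiv_apply_one_eq_deriv]
    rw [heq]
    refine ContDiff.fderiv_apply (m := (⊤ : ℕ∞))
      (f := fun p : ℝ × ℝ => fun t' => pderivMixed 0 j T p.1 t')
      (g := fun p : ℝ × ℝ => p.2) (k := fun _ => (1:ℝ)) ?_ contDiff_snd contDiff_const ?_
    · exact ih.comp ((contDiff_fst.fst).prodMk contDiff_snd)
    · exact (by simp)

private lemma pderivMixed_mul_eq {T : ℝ → ℝ → ℂ} (hT : ContDiff ℝ (⊤ : ℕ∞) (Function.uncurry T))
    {m : ℝ → ℝ} (hm : ContDiff ℝ (⊤ : ℕ∞) m) (i j : ℕ) (s t : ℝ) :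
    pderivMixed i j (fun s' t' => (m s' : ℂ) * T s' t') s t
      = ∑ k ∈ range (i + 1), i.choose k •
          (iteratedDeriv k (fun x => (m x : ℂ)) s • pderivMixed (i - k) j T s t) := by
  have hmC : ContDiff ℝ (⊤ : ℕ∞) (fun x => (m x : ℂ)) := Complex.ofRealCLM.contDiff.comp hm
  have hTs : ∀ s' : ℝ, ContDiff ℝ (⊤ : ℕ∞) (fun t' => T s' t') :=
    fun s' => hT.comp (contDiff_const.prodMk contDiff_id)
  have hGs : ContDiff ℝ (⊤ : ℕ∞) (fun s' => pderivMixed 0 j T s' t) :=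
    (pderivMixed_zero_smooth hT j).comp (contDiff_id.prodMk contDiff_const)
  have hinner : (fun s' => iteratedDeriv j (fun t' => (m s' : ℂ) * T s' t') t)
      = fun s' => (m s' : ℂ) • pderivMixed 0 j T s' t := by
    funext s'
    have h := iteratedDeriv_clm_comp'
      (((ContinuousLinearMap.mul ℂ ℂ) ((m s' : ℂ))).restrictScalars ℝ) (hTs s') j t
    simp only [ContinuousLinearMap.coe_restrictScalars', ContinuousLinearMap.mul_apply'] at h
    rw [h]
    simp [pderivMixed, smul_eq_mul]
  show iteratedDeriv i (fun s' => iteratedDeriv j (fun t' => (m s' : ℂ) * T s' t') t) s = _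
  rw [hinner]
  rw [iteratedDeriv_smul_leibniz hmC hGs i s]
  refine sum_congr rfl fun k _ => ?_
  have hres : iteratedDeriv (i - k) (fun s' => pderivMixed 0 j T s' t) s
      = pderivMixed (i - k) j T s t := by
    have : (fun s' => pderivMixed 0 j T s' t)
        = fun s' => iteratedDeriv j (fun t' => T s' t') t := by
      funext s'; simp [pderivMixed]
    rw [this]; rfl
  rw [hres]

private lemma lintegral_nnnorm_sq_eq {α : Type*} [MeasurableSpace α] (μ : Measure α)
    {E : Type*} [NormedAddCommGroup E] (g : α → E) :
    ∫⁻ x, (‖g x‖₊ : ℝ≥0∞) ^ 2 ∂μ = eLpNorm g 2 μ ^ 2 := by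
  rw [eLpNorm_eq_lintegral_rpow_enorm_toReal two_ne_zero ENNReal.ofNat_ne_top]
  rw [← ENNReal.rpow_natCast _ 2, ← ENNReal.rpow_mul]
  simp only [ENNReal.toReal_ofNat]
  norm_num
  rfl

private lemma exists_mulCLM {m : ℝ → ℝ} (hmc : Continuous m) {C : ℝ} (hC0 : 0 ≤ C)
    (hb : ∀ x, |m x| ≤ C) :
    ∃ M : L2R →L[ℂ] L2R,
      ∀ f : L2R, (M f : ℝ → ℂ) =ᵐ[(volume : Measure ℝ)] fun x => (m x : ℂ) * (f : ℝ → ℂ) x := by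
  have hmem : ∀ f : L2R, MemLp (fun x => (m x : ℂ) * (f : ℝ → ℂ) x) 2 (volume : Measure ℝ) := by
    intro f
    refine (Lp.memLp f).of_le_mul (c := C)
      ((Complex.continuous_ofReal.comp hmc).aestronglyMeasurable.mul
        (Lp.aestronglyMeasurable f)) ?_
    filter_upwards with x
    rw [norm_mul]
    have : ‖((m x : ℝ) : ℂ)‖ ≤ C := by rw [Complex.norm_real]; exact hb x
    exact mul_le_mul_of_nonneg_right this (norm_nonneg _)
  have hnorm : ∀ f : L2R, ‖(hmem f).toLp _‖ ≤ C * ‖f‖ := by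
    intro f
    rw [Lp.norm_toLp]
    have h1 : eLpNorm (fun x => (m x : ℂ) * (f : ℝ → ℂ) x) 2 volume
        ≤ eLpNorm (fun x => (C : ℂ) • (f : ℝ → ℂ) x) 2 volume := by
      refine eLpNorm_mono fun x => ?_
      rw [norm_mul, norm_smul]
      refine mul_le_mul_of_nonneg_right ?_ (norm_nonneg _)
      rw [Complex.norm_real]
      simpa [abs_of_nonneg hC0] using hb x
    have h2 : eLpNorm (fun x => (C : ℂ) • (f : ℝ → ℂ) x) 2 volume
        = (‖(C : ℂ)‖₊ : ℝ≥0∞) * eLpNorm (f : ℝ → ℂ) 2 volume := by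
      rw [show (fun x => (C : ℂ) • (f : ℝ → ℂ) x) = (C : ℂ) • (f : ℝ → ℂ) from rfl]
      rw [eLpNorm_const_smul]
      rfl
    have hne : (‖(C : ℂ)‖₊ : ℝ≥0∞) * eLpNorm (f : ℝ → ℂ) 2 volume ≠ ⊤ :=
      ENNReal.mul_ne_top ENNReal.coe_ne_top (Lp.memLp f).2.ne
    calc (eLpNorm (fun x => (m x : ℂ) * (f : ℝ → ℂ) x) 2 volume).toReal
        ≤ ((‖(C : ℂ)‖₊ : ℝ≥0∞) * eLpNorm (f : ℝ → ℂ) 2 volume).toReal := by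
          refine ENNReal.toReal_mono hne (h1.trans_eq h2)
      _ = C * ‖f‖ := by
          rw [ENNReal.toReal_mul, ENNReal.coe_toReal, coe_nnnorm, Complex.norm_real,
            Real.norm_eq_abs, abs_of_nonneg hC0, ← Lp.norm_def]
  let L : L2R →ₗ[ℂ] L2R :=
    { toFun := fun f => (hmem f).toLp _
      map_add' := by
        intro f g
        refine Lp.ext ?_
        filter_upwards [(hmem (f + g)).coeFn_toLp, Lp.coeFn_add ((hmem f).toLp _) ((hmem g).toLp _),
          (hmem f).coeFn_toLp, (hmem g).coeFn_toLp, Lp.coeFn_add f g] with x h1 h2 h3 h4 h5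
        rw [h1, h2, Pi.add_apply, h3, h4, h5, Pi.add_apply, mul_add]
      map_smul' := by
        intro c f
        refine Lp.ext ?_
        filter_upwards [(hmem (c • f)).coeFn_toLp, Lp.coeFn_smul c ((hmem f).toLp _),
          (hmem f).coeFn_toLp, Lp.coeFn_smul c f] with x h1 h2 h3 h4
        rw [RingHom.id_apply, h1, h2, Pi.smul_apply, h3, h4, Pi.smul_apply, smul_eq_mul,
          smul_eq_mul]
        ring }
  refine ⟨L.mkContinuous C hnorm, fun f => ?_⟩
  exact (hmem f).coeFn_toLp

end Aux

/-- multiplying a Mercer-type `K^∞` kernel by a smooth positive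
`L²` function with all derivatives vanishing at infinity yields a kernel that
is both Hilbert–Schmidt and `K^∞`. -/


theorem mul_mercer_KInfty_is_hilbertSchmidt_KInfty
    (T : ℝ → ℝ → ℂ) (hT : IsMercerKInftyKernel T)
    (m : ℝ → ℝ) (hm : ContDiff ℝ (⊤ : ℕ∞) m) (hmpos : ∀ x : ℝ, 0 < m x)
    (hmL2 : MemLp m 2 (volume : Measure ℝ))
    (hmC0 : ∀ i : ℕ, InC0 (iteratedDeriv i m)) :
    IsHilbertSchmidtKernel (fun s t => (m s : ℂ) * T s t) ∧
    IsKInftyKernel (fun s t => (m s : ℂ) * T s t) := by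
  obtain ⟨⟨hTmeas, hTrow, hTcol, hTsm, hTpd, ⟨tC, htC, htCsm, htC0⟩, ⟨tC', htC', htC'sm, htC'0⟩⟩,
    -⟩ := hT
  have hmc : Continuous m := hm.continuous
  have hmCsm : ContDiff ℝ (⊤ : ℕ∞) (fun x => (m x : ℂ)) := Complex.ofRealCLM.contDiff.comp hm
  have hmCc : Continuous (fun x => (m x : ℂ)) := Complex.continuous_ofReal.comp hmc
  have hInC0m : InC0 m := by have h := hmC0 0; rwa [iteratedDeriv_zero] at h
  obtain ⟨C, hC0, hCb⟩ := hInC0m.exists_bound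
  have hInC0tC : InC0 tC := by have h := htC0 0; rwa [iteratedDeriv_zero] at h
  obtain ⟨D, hD0, hDb⟩ := hInC0tC.exists_bound
  have hmeasG : Measurable (Function.uncurry fun s t => (m s : ℂ) * T s t) :=
    ((Complex.measurable_ofReal.comp hmc.measurable).comp measurable_fst).mul hTmeas
  have hmk : ∀ k : ℕ, iteratedDeriv k (fun x => (m x : ℂ))
      = fun x => ((iteratedDeriv k m x : ℝ) : ℂ) :=
    fun k => funext fun x => iteratedDeriv_clm_comp' Complex.ofRealCLM hm k x
  constructor
  · -- Hilbert–Schmidt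
    refine ⟨hmeasG, ?_⟩
    have hIs : ∀ s : ℝ, ∫⁻ t, (‖T s t‖₊ : ℝ≥0∞) ^ 2 ≤ (ENNReal.ofReal D) ^ 2 := by
      intro s
      have h1 : ∫⁻ t, (‖T s t‖₊ : ℝ≥0∞) ^ 2 = ∫⁻ t, (‖(tC s : ℝ → ℂ) t‖₊ : ℝ≥0∞) ^ 2 := by
        refine lintegral_congr_ae ((htC s).mono fun y hy => ?_)
        simp [hy]
      rw [h1, lintegral_nnnorm_sq_eq]
      have h2 : eLpNorm (tC s : ℝ → ℂ) 2 volume = ENNReal.ofReal ‖tC s‖ := by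
        rw [Lp.norm_def, ENNReal.ofReal_toReal (Lp.memLp (tC s)).2.ne]
      rw [h2]
      exact pow_le_pow_left' (ENNReal.ofReal_le_ofReal (hDb s)) 2
    calc ∫⁻ s, ∫⁻ t, (‖(fun s t => (m s : ℂ) * T s t) s t‖₊ : ℝ≥0∞) ^ 2
        = ∫⁻ s, (‖m s‖₊ : ℝ≥0∞) ^ 2 * ∫⁻ t, (‖T s t‖₊ : ℝ≥0∞) ^ 2 := by
          refine lintegral_congr fun s => ?_
          rw [← lintegral_const_mul' _ _ (ENNReal.pow_ne_top ENNReal.coe_ne_top)]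
          refine lintegral_congr fun t => ?_
          rw [nnnorm_mul]
          push_cast
          rw [mul_pow]
          congr 2
          simp
      _ ≤ ∫⁻ s, (ENNReal.ofReal D) ^ 2 * (‖m s‖₊ : ℝ≥0∞) ^ 2 := by
          refine lintegral_mono fun s => ?_
          rw [mul_comm]
          exact mul_le_mul_left (hIs s) _
      _ = (ENNReal.ofReal D) ^ 2 * ∫⁻ s, (‖m s‖₊ : ℝ≥0∞) ^ 2 :=
          lintegral_const_mul' _ _ (ENNReal.pow_ne_top ENNReal.ofReal_ne_top)
      _ < ⊤ := by
          rw [lintegral_nnnorm_sq_eq]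
          exact ENNReal.mul_lt_top (ENNReal.pow_lt_top ENNReal.ofReal_lt_top) (ENNReal.pow_lt_top hmL2.2)
  · -- K-infinity
    refine ⟨hmeasG, ?_, ?_, ?_, ?_, ?_, ?_⟩
    · filter_upwards [hTrow] with x hx
      exact hx.const_mul _
    · filter_upwards [hTcol] with x hx
      refine hx.of_le_mul (c := C) (hmCc.aestronglyMeasurable.mul hx.1) ?_
      filter_upwards with y
      rw [norm_mul]
      refine mul_le_mul_of_nonneg_right ?_ (norm_nonneg _)
      rw [Complex.norm_real, Real.norm_eq_abs, ← Real.norm_eq_abs]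
      exact hCb y
    · exact (hmCsm.comp contDiff_fst).mul hTsm
    · intro i j
      have heq : (fun p : ℝ × ℝ => pderivMixed i j (fun s t => (m s : ℂ) * T s t) p.1 p.2)
          = fun p : ℝ × ℝ => ∑ k ∈ Finset.range (i + 1), i.choose k •
              (iteratedDeriv k (fun x => (m x : ℂ)) p.1 • pderivMixed (i - k) j T p.1 p.2) :=
        funext fun p => pderivMixed_mul_eq hTsm hm i j p.1 p.2
      rw [heq]
      refine InC0.sum _ _ fun k _ => ?_
      obtain ⟨Ck, hCk0, hCkb⟩ := (hmC0 k).exists_bound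
      refine InC0.nsmul ?_ _
      refine InC0.smul_bdd (C := Ck) ?_ ?_ (hTpd (i - k) j)
      · rw [hmk k]
        exact Complex.continuous_ofReal.comp ((hmC0 k).1.comp continuous_fst)
      · intro p
        rw [hmk k, Complex.norm_real]
        exact hCkb p.1
    · refine ⟨fun s => (m s : ℂ) • tC s, fun s => ?_, ?_, ?_⟩
      · filter_upwards [Lp.coeFn_smul ((m s : ℂ)) (tC s), htC s] with y h1 h2
        rw [h1, Pi.smul_apply, h2]
        simp only [smul_eq_mul, map_mul, Complex.conj_ofReal]
      · have h := (((ContinuousLinearMap.lsmul ℝ ℂ :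
            ℂ →L[ℝ] L2R →L[ℝ] L2R).contDiff.comp hmCsm).clm_apply htCsm :
            ContDiff ℝ (⊤ : ℕ∞) fun s => ContinuousLinearMap.lsmul ℝ ℂ ((m s : ℂ)) (tC s))
        simpa only [Function.comp_apply, ContinuousLinearMap.lsmul_apply] using h
      · intro i
        have hiter : iteratedDeriv i (fun s => (m s : ℂ) • tC s)
            = fun x => ∑ k ∈ Finset.range (i + 1), i.choose k •
                (iteratedDeriv k (fun x => (m x : ℂ)) x • iteratedDeriv (i - k) tC x) :=
          funext (iteratedDeriv_smul_leibniz hmCsm htCsm i)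
        rw [hiter]
        refine InC0.sum _ _ fun k _ => ?_
        obtain ⟨Ck, hCk0, hCkb⟩ := (hmC0 k).exists_bound
        refine InC0.nsmul ?_ _
        refine InC0.smul_bdd (C := Ck) ?_ ?_ (htC0 (i - k))
        · rw [hmk k]
          exact Complex.continuous_ofReal.comp (hmC0 k).1
        · intro x
          rw [hmk k, Complex.norm_real]
          exact hCkb x
    · obtain ⟨M, hM⟩ := exists_mulCLM hmc hC0 (fun x => by
        rw [← Real.norm_eq_abs]; exact hCb x)
      refine ⟨fun t => M (tC' t), fun t => ?_, ?_, ?_⟩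
      · filter_upwards [hM (tC' t), htC' t] with y h1 h2
        rw [h1, h2]
      · exact (M.restrictScalars ℝ : L2R →L[ℝ] L2R).contDiff.comp htC'sm
      · intro j
        show InC0 (iteratedDeriv j fun t => (M.restrictScalars ℝ : L2R →L[ℝ] L2R) (tC' t))
        have hiter : iteratedDeriv j (fun t => (M.restrictScalars ℝ : L2R →L[ℝ] L2R) (tC' t))
            = fun t => (M.restrictScalars ℝ : L2R →L[ℝ] L2R) (iteratedDeriv j tC' t) :=
          funext fun t => iteratedDeriv_clm_comp' (M.restrictScalars ℝ) htC'sm j t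
        rw [hiter]
        exact (htC'0 j).clm_comp _
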